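/- arXiv:2401.11747 — 4 statements merged into one kernel-verified Lean document; each statement's English description precedes it below -/
import Mathlib

section
/- For every natural number q ≥ 2 and every natural number n ≥ 1, the identity q^{6n-4}(q²-1)(q²-q) = q^{3n-1}(q²-1)(q²-q)(q²+q-1)^{n-1} + Σ_{k=1}^{n-1} [ q^{3k-1}(q²-1)(q²-q)(q²+q-1)^{k-1} · q^{6(n-k)-4}(q²-1)(q²-q) ] holds. (Equivalently: the sequence f(n) = q^{3n-1}(q²-1)(q²-q)(q²+q-1)^{n-1} is the unique solution of the renewal equation f(n) = g(n) − Σ_{k=1}^{n-1} f(k) g(n−k) for g(n) = q^{6n-4}(q²-1)(q²-q).) -/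
lemma key_PGL3 (q : ℕ) (hq : 2 ≤ q) :
    q ^ 3 * (q ^ 2 + q - 1) + q ^ 2 * ((q ^ 2 - 1) * (q ^ 2 - q)) = q ^ 6 := by
  have h1 : 1 ≤ q ^ 2 := by nlinarith
  have h2 : q ≤ q ^ 2 := by nlinarith
  have h3 : 1 ≤ q ^ 2 + q := by omega
  zify [h1, h2, h3]
  ring

lemma aux_PGL3 (q : ℕ) (hq : 2 ≤ q) (m : ℕ) :
    q ^ (6 * m + 2) * (q ^ 2 - 1) * (q ^ 2 - q) =
      q ^ (3 * m + 2) * (q ^ 2 - 1) * (q ^ 2 - q) * (q ^ 2 + q - 1) ^ m +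
        ∑ k ∈ Finset.Icc 1 m,
          (q ^ (3 * k - 1) * (q ^ 2 - 1) * (q ^ 2 - q) * (q ^ 2 + q - 1) ^ (k - 1)) *
            (q ^ (6 * (m - k) + 2) * (q ^ 2 - 1) * (q ^ 2 - q)) := by
  have h1 : 1 ≤ q ^ 2 := by nlinarith
  have h2 : q ≤ q ^ 2 := by nlinarith
  have h3 : 1 ≤ q ^ 2 + q := by omega
  induction m with
  | zero => simp
  | succ m ih =>
    rw [Finset.sum_Icc_succ_top (by omega : 1 ≤ m + 1)]
    have hsum : ∑ k ∈ Finset.Icc 1 m,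
        (q ^ (3 * k - 1) * (q ^ 2 - 1) * (q ^ 2 - q) * (q ^ 2 + q - 1) ^ (k - 1)) *
          (q ^ (6 * (m + 1 - k) + 2) * (q ^ 2 - 1) * (q ^ 2 - q)) =
        q ^ 6 * ∑ k ∈ Finset.Icc 1 m,
        (q ^ (3 * k - 1) * (q ^ 2 - 1) * (q ^ 2 - q) * (q ^ 2 + q - 1) ^ (k - 1)) *
          (q ^ (6 * (m - k) + 2) * (q ^ 2 - 1) * (q ^ 2 - q)) := by
      rw [Finset.mul_sum]
      refine Finset.sum_congr rfl fun k hk => ?_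
      simp only [Finset.mem_Icc] at hk
      have he : 6 * (m + 1 - k) + 2 = (6 * (m - k) + 2) + 6 := by omega
      rw [he, pow_add]
      ring
    rw [hsum]
    have key := key_PGL3 q hq
    have e1 : 6 * (m + 1) + 2 = (6 * m + 2) + 6 := by ring
    have e2 : 3 * (m + 1) + 2 = (3 * m + 2) + 3 := by ring
    have e4 : 3 * (m + 1) - 1 = 3 * m + 2 := by omega
    have e5 : 6 * (m + 1 - (m + 1)) + 2 = 2 := by omega
    have e3 : m + 1 - 1 = m := rfl
    rw [e1, e2, e4, e5, e3]
    calc q ^ (6 * m + 2 + 6) * (q ^ 2 - 1) * (q ^ 2 - q)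
        = q ^ 6 * (q ^ (6 * m + 2) * (q ^ 2 - 1) * (q ^ 2 - q)) := by ring
      _ = q ^ 6 * (q ^ (3 * m + 2) * (q ^ 2 - 1) * (q ^ 2 - q) * (q ^ 2 + q - 1) ^ m +
            ∑ k ∈ Finset.Icc 1 m,
              (q ^ (3 * k - 1) * (q ^ 2 - 1) * (q ^ 2 - q) * (q ^ 2 + q - 1) ^ (k - 1)) *
                (q ^ (6 * (m - k) + 2) * (q ^ 2 - 1) * (q ^ 2 - q))) := by rw [ih]
      _ = (q ^ 3 * (q ^ 2 + q - 1) + q ^ 2 * ((q ^ 2 - 1) * (q ^ 2 - q))) *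
            (q ^ (3 * m + 2) * (q ^ 2 - 1) * (q ^ 2 - q) * (q ^ 2 + q - 1) ^ m) +
            q ^ 6 * ∑ k ∈ Finset.Icc 1 m,
              (q ^ (3 * k - 1) * (q ^ 2 - 1) * (q ^ 2 - q) * (q ^ 2 + q - 1) ^ (k - 1)) *
                (q ^ (6 * (m - k) + 2) * (q ^ 2 - 1) * (q ^ 2 - q)) := by rw [key]; ring
      _ = _ := by ring

/-- The renewal identity relating the number `g(n) = q^(6n-4)(q²-1)(q²-q)` of closed
type-1 geodesic cycles of length `3n` at `o` and the number
`f(n) = q^(3n-1)(q²-1)(q²-q)(q²+q-1)^(n-1)` of first-return cycles of length `3n` at `o`. -/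
theorem renewal_identity_PGL3 (q n : ℕ) (hq : 2 ≤ q) (hn : 1 ≤ n) :
    q ^ (6 * n - 4) * (q ^ 2 - 1) * (q ^ 2 - q) =
      q ^ (3 * n - 1) * (q ^ 2 - 1) * (q ^ 2 - q) * (q ^ 2 + q - 1) ^ (n - 1) +
        ∑ k ∈ Finset.Icc 1 (n - 1),
          (q ^ (3 * k - 1) * (q ^ 2 - 1) * (q ^ 2 - q) * (q ^ 2 + q - 1) ^ (k - 1)) *
            (q ^ (6 * (n - k) - 4) * (q ^ 2 - 1) * (q ^ 2 - q)) := by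
  obtain ⟨m, rfl⟩ : ∃ m, n = m + 1 := ⟨n - 1, by omega⟩
  have e1 : 6 * (m + 1) - 4 = 6 * m + 2 := by omega
  have e2 : 3 * (m + 1) - 1 = 3 * m + 2 := by omega
  have e3 : m + 1 - 1 = m := rfl
  rw [e1, e2, e3]
  have hsum : ∑ k ∈ Finset.Icc 1 m,
      (q ^ (3 * k - 1) * (q ^ 2 - 1) * (q ^ 2 - q) * (q ^ 2 + q - 1) ^ (k - 1)) *
        (q ^ (6 * (m + 1 - k) - 4) * (q ^ 2 - 1) * (q ^ 2 - q)) =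
      ∑ k ∈ Finset.Icc 1 m,
      (q ^ (3 * k - 1) * (q ^ 2 - 1) * (q ^ 2 - q) * (q ^ 2 + q - 1) ^ (k - 1)) *
        (q ^ (6 * (m - k) + 2) * (q ^ 2 - 1) * (q ^ 2 - q)) := by
    refine Finset.sum_congr rfl fun k hk => ?_
    simp only [Finset.mem_Icc] at hk
    have : 6 * (m + 1 - k) - 4 = 6 * (m - k) + 2 := by omega
    rw [this]
  rw [hsum]
  exact aux_PGL3 q hq m
end

section
/- For every real number q ≥ 2, the sequence n ↦ (1/(3n)) · log( q^{3n-1}(q²-1)(q²-q)(q²+q-1)^{n-1} ) converges as n → ∞ to the limit L = log q + (1/3)·log(q²+q-1), and moreover L < 2·log q. -/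
open Filter Real

/-- `(1/(3n)) log f_{3n}(o)` converges to `L = log q + (1/3) log(q²+q-1)`, and `L < 2 log q`,
where `f_{3n}(o) = q^(3n-1)(q²-1)(q²-q)(q²+q-1)^(n-1)`.  This is the strongly positive
recurrence property of the type-1 geodesic flow. -/
theorem strongly_positive_recurrence_PGL3 (q : ℝ) (hq : 2 ≤ q) :
    Tendsto
      (fun n : ℕ =>
        (1 / (3 * (n : ℝ))) *
          Real.log (q ^ (3 * (n : ℤ) - 1) * (q ^ 2 - 1) * (q ^ 2 - q) *
            (q ^ 2 + q - 1) ^ ((n : ℤ) - 1)))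
      atTop (nhds (Real.log q + (1 / 3) * Real.log (q ^ 2 + q - 1))) ∧
    Real.log q + (1 / 3) * Real.log (q ^ 2 + q - 1) < 2 * Real.log q := by
  have hq0 : 0 < q := by linarith
  have h1 : 0 < q ^ 2 - 1 := by nlinarith
  have h2 : 0 < q ^ 2 - q := by nlinarith
  have h3 : 0 < q ^ 2 + q - 1 := by nlinarith
  set a := Real.log q with ha
  set b := Real.log (q ^ 2 + q - 1) with hb
  set c := Real.log (q ^ 2 - 1) + Real.log (q ^ 2 - q) with hc
  constructor
  · have key : ∀ᶠ n : ℕ in atTop,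
        (1 / (3 * (n : ℝ))) *
          Real.log (q ^ (3 * (n : ℤ) - 1) * (q ^ 2 - 1) * (q ^ 2 - q) *
            (q ^ 2 + q - 1) ^ ((n : ℤ) - 1))
        = a + (1 / 3) * b + ((-a + c - b) / 3) * (1 / (n : ℝ)) := by
      filter_upwards [eventually_ge_atTop 1] with n hn
      have hn' : (0 : ℝ) < (n : ℝ) := by exact_mod_cast hn
      have hz1 : q ^ (3 * (n : ℤ) - 1) ≠ 0 := zpow_ne_zero _ hq0.ne'
      have hz2 : q ^ 2 - 1 ≠ 0 := h1.ne'
      have hz3 : q ^ 2 - q ≠ 0 := h2.ne'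
      have hz4 : (q ^ 2 + q - 1) ^ ((n : ℤ) - 1) ≠ 0 := zpow_ne_zero _ h3.ne'
      rw [Real.log_mul (by positivity) hz4, Real.log_mul (by positivity) hz3,
        Real.log_mul hz1 hz2, Real.log_zpow, Real.log_zpow]
      push_cast
      field_simp
      rw [ha, hb, hc]
      ring_nf
    have lim : Tendsto (fun n : ℕ => a + (1 / 3) * b + ((-a + c - b) / 3) * (1 / (n : ℝ)))
        atTop (nhds (a + (1 / 3) * b)) := by
      have h0 := tendsto_one_div_atTop_nhds_zero_nat (𝕜 := ℝ)
      simpa using tendsto_const_nhds.add (h0.const_mul ((-a + c - b) / 3))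
    exact lim.congr' (Filter.EventuallyEq.symm key)
  · have hlt : q ^ 2 + q - 1 < q ^ 3 := by nlinarith
    have : b < Real.log (q ^ 3) := Real.log_lt_log h3 hlt
    rw [Real.log_pow] at this
    push_cast at this
    linarith
end

section
/- Let g ∈ GL₃(F). Then the following are equivalent: (i) for every integer n ∈ ℤ, the matrices g·d(n) and d(n) represent the same vertex, i.e. there exist s ∈ Fˣ and k ∈ GL₃(F) with all entries of k in O and det(k) a unit of O such that g·d(n) = s • (d(n)·k); (ii) there exist s ∈ Fˣ and k ∈ GL₃(F) with all entries of k in O, det(k) a unit of O, and k₁₂ = k₁₃ = k₂₁ = k₃₁ = 0, such that g = s • k. -/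
open scoped Multiplicative

local notation "ℤₘ₀" => WithZero (Multiplicative ℤ)


open FunctionField

/-- The embedding of the rational function field `F_q(t)` into its completion
`F_q((t⁻¹))` at the place at infinity. -/
noncomputable def ratFuncEmb (Fq : Type) [Field Fq] [Fintype Fq]
    [DecidableEq (RatFunc Fq)] : RatFunc Fq →+* RatFunc.CompletionAtInfty Fq :=
  letI := RatFunc.inftyValued Fq
  UniformSpace.Completion.coeRingHom

/-- The element `t` of `F = F_q((t⁻¹))`, the image of the rational function `X`. -/
noncomputable def tF (Fq : Type) [Field Fq] [Fintype Fq]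
    [DecidableEq (RatFunc Fq)] : RatFunc.CompletionAtInfty Fq :=
  ratFuncEmb Fq RatFunc.X

/-- A matrix has all its entries in the valuation ring `O = F_q[[t⁻¹]]`. -/
def entriesInO (Fq : Type) [Field Fq] [Fintype Fq] [DecidableEq (RatFunc Fq)]
    (k : Matrix (Fin 3) (Fin 3) (RatFunc.CompletionAtInfty Fq)) : Prop :=
  ∀ i j, Valued.v (k i j) ≤ 1

/-- The determinant of a matrix is a unit of the valuation ring `O = F_q[[t⁻¹]]`,
i.e. it has valuation exactly `1`. -/
def detUnitO (Fq : Type) [Field Fq] [Fintype Fq] [DecidableEq (RatFunc Fq)]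
    (k : Matrix (Fin 3) (Fin 3) (RatFunc.CompletionAtInfty Fq)) : Prop :=
  Valued.v k.det = 1

/-- The diagonal matrix `d(n) = diag(tⁿ, 1, 1)`. -/
noncomputable def dmat (Fq : Type) [Field Fq] [Fintype Fq]
    [DecidableEq (RatFunc Fq)] (n : ℤ) : Matrix (Fin 3) (Fin 3) (RatFunc.CompletionAtInfty Fq) :=
  Matrix.diagonal ![tF Fq ^ n, 1, 1]

section Aux

variable (Fq : Type) [Field Fq] [Fintype Fq] [DecidableEq (RatFunc Fq)]

lemma tF_v : Valued.v (tF Fq) = ((Multiplicative.ofAdd (1:ℤ) : Multiplicative ℤ) : ℤₘ₀) := by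
  letI := RatFunc.inftyValued Fq
  have h := Valued.valuedCompletion_apply (K := RatFunc Fq) (Γ₀ := ℤₘ₀) (RatFunc.X)
  have h2 : tF Fq = UniformSpace.Completion.coe' (RatFunc.X : RatFunc Fq) := rfl
  rw [h2]; erw [h]; rw [RatFunc.inftyValued.def]; exact RatFunc.inftyValuation.X (F := Fq)

lemma tF_v_zpow (n : ℤ) :
    Valued.v (tF Fq ^ n) = ((Multiplicative.ofAdd (n:ℤ) : Multiplicative ℤ) : ℤₘ₀) := by
  rw [map_zpow₀, tF_v, ← WithZero.coe_zpow]
  congr 1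
  rw [← ofAdd_zsmul, smul_eq_mul, mul_one]

lemma tF_ne_zero : tF Fq ≠ 0 := by
  intro h
  have := tF_v Fq
  rw [h, map_zero] at this
  exact (WithZero.coe_ne_zero this.symm)

lemma dmat_zero : dmat Fq 0 = 1 := by
  have : (![tF Fq ^ (0:ℤ), 1, 1] : Fin 3 → RatFunc.CompletionAtInfty Fq) = fun _ => 1 := by
    funext i; fin_cases i <;> simp
  rw [dmat, this, Matrix.diagonal_one]

lemma dmat_det (n : ℤ) : (dmat Fq n).det = tF Fq ^ n := by
  simp [dmat, Matrix.det_diagonal, Fin.prod_univ_three]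

lemma val_eq_zero_of_forall (x : RatFunc.CompletionAtInfty Fq)
    (h : ∀ n : ℤ, Valued.v x ≤ ((Multiplicative.ofAdd n : Multiplicative ℤ) : ℤₘ₀)) :
    x = 0 := by
  by_contra hx
  have hv : Valued.v x ≠ 0 := (Valuation.ne_zero_iff (Valued.v)).mpr hx
  obtain ⟨a, ha⟩ := WithZero.ne_zero_iff_exists.mp hv
  have h1 := h (a.toAdd - 1)
  rw [← ha, WithZero.coe_le_coe] at h1
  have h2 : a.toAdd ≤ a.toAdd - 1 := by simpa using Multiplicative.toAdd_le.mpr h1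
  omega

lemma cube_eq_one {x : ℤₘ₀} (hx : x ≠ 0) (h : x ^ 3 = 1) : x = 1 := by
  obtain ⟨a, ha⟩ := WithZero.ne_zero_iff_exists.mp hx
  rw [← ha, ← WithZero.coe_pow, ← WithZero.coe_one, WithZero.coe_inj] at h
  have h3 : (3 : ℕ) • a.toAdd = 0 := by
    have := congrArg Multiplicative.toAdd h
    simpa using this
  have h0 : a.toAdd = 0 := by simpa using h3
  rw [← ha, show a = 1 from by rw [← ofAdd_toAdd a, h0, ofAdd_zero], WithZero.coe_one]

end Aux

/-- Identification of the stabilizer `M` of the standard type-1 geodesic: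
`g` fixes every vertex `diag(tⁿ,1,1)K` (up to scalars) iff `g` is, up to a scalar,
a matrix over `O` with unit determinant whose `(1,2), (1,3), (2,1), (3,1)` entries vanish. -/
theorem stabilizer_of_standard_type1_geodesic (Fq : Type) [Field Fq] [Fintype Fq]
    [DecidableEq (RatFunc Fq)] (g : GL (Fin 3) (RatFunc.CompletionAtInfty Fq)) :
    (∀ n : ℤ, ∃ (s : (RatFunc.CompletionAtInfty Fq)ˣ) (k : GL (Fin 3) (RatFunc.CompletionAtInfty Fq)),
        entriesInO Fq k.val ∧ detUnitO Fq k.val ∧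
          g.val * dmat Fq n = s.val • (dmat Fq n * k.val)) ↔
      (∃ (s : (RatFunc.CompletionAtInfty Fq)ˣ) (k : GL (Fin 3) (RatFunc.CompletionAtInfty Fq)),
        entriesInO Fq k.val ∧ detUnitO Fq k.val ∧
          k.val 0 1 = 0 ∧ k.val 0 2 = 0 ∧ k.val 1 0 = 0 ∧ k.val 2 0 = 0 ∧
          g.val = s.val • k.val) := by
  constructor
  · intro h
    obtain ⟨s0, k0, hO0, hdet0, heq0⟩ := h 0
    rw [dmat_zero, mul_one, one_mul] at heq0
    -- key relation for each n
    have key : ∀ n : ℤ, ∃ (c : (RatFunc.CompletionAtInfty Fq)ˣ) (kn : GL (Fin 3) (RatFunc.CompletionAtInfty Fq)),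
        entriesInO Fq kn.val ∧ Valued.v c.val = 1 ∧
        k0.val * dmat Fq n = c.val • (dmat Fq n * kn.val) := by
      intro n
      obtain ⟨sn, kn, hOn, hdetn, heqn⟩ := h n
      rw [heq0, Matrix.smul_mul] at heqn
      have heqn' : k0.val * dmat Fq n = (s0⁻¹ * sn).val • (dmat Fq n * kn.val) := by
        have h' := congrArg (fun M => (s0.val)⁻¹ • M) heqn
        simpa [smul_smul, inv_mul_cancel₀ (Units.ne_zero s0), Units.val_mul,
          Units.val_inv_eq_inv_val] using h'
      refine ⟨s0⁻¹ * sn, kn, hOn, ?_, heqn'⟩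
      have hdeq := congrArg Matrix.det heqn'
      rw [Matrix.det_mul, Matrix.det_smul, Matrix.det_mul, dmat_det, Fintype.card_fin] at hdeq
      have htn : tF Fq ^ n ≠ 0 := zpow_ne_zero n (tF_ne_zero Fq)
      have hd2 : k0.val.det = (s0⁻¹ * sn).val ^ 3 * kn.val.det :=
        mul_right_cancel₀ htn (by rw [hdeq]; ring)
      have hval := congrArg Valued.v hd2
      rw [map_mul, map_pow, hdet0, hdetn, mul_one] at hval
      exact cube_eq_one (by simp [Units.ne_zero]) hval.symm
    -- zero entries of k0
    have hrow : ∀ i : Fin 3, i ≠ 0 → k0.val i 0 = 0 := by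
      intro i hi
      apply val_eq_zero_of_forall
      intro m
      obtain ⟨c, kn, hOn, hcv, heqn⟩ := key (-m)
      have hent := congrFun (congrFun heqn i) 0
      simp only [dmat] at hent
      rw [Matrix.mul_diagonal, Matrix.smul_apply, Matrix.diagonal_mul] at hent
      have hEnt : k0.val i 0 * tF Fq ^ (-m) = c.val * (![tF Fq ^ (-m), 1, 1] i * kn.val i 0) := by
        simpa [dmat] using hent
      have hdi : (![tF Fq ^ (-m), (1:RatFunc.CompletionAtInfty Fq), 1] i) = 1 := by
        fin_cases i <;> simp_all
      rw [hdi, one_mul] at hEnt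
      have hv := congrArg Valued.v hEnt
      rw [map_mul, map_mul, tF_v_zpow, hcv, one_mul] at hv
      have hle : Valued.v (k0.val i 0) * ((Multiplicative.ofAdd (-m) : Multiplicative ℤ) : ℤₘ₀) ≤ 1 :=
        hv ▸ hOn i 0
      have := mul_le_mul_left hle ((Multiplicative.ofAdd (m : ℤ) : Multiplicative ℤ) : ℤₘ₀)
      rw [mul_assoc, ← WithZero.coe_mul, ← ofAdd_add, one_mul] at this
      simpa using this
    have hcol : ∀ j : Fin 3, j ≠ 0 → k0.val 0 j = 0 := by
      intro j hj
      apply val_eq_zero_of_forall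
      intro m
      obtain ⟨c, kn, hOn, hcv, heqn⟩ := key m
      have hent := congrFun (congrFun heqn 0) j
      simp only [dmat] at hent
      rw [Matrix.mul_diagonal, Matrix.smul_apply, Matrix.diagonal_mul] at hent
      have hdj : (![tF Fq ^ m, (1:RatFunc.CompletionAtInfty Fq), 1] j) = 1 := by
        fin_cases j <;> simp_all
      have hEnt : k0.val 0 j = c.val * (tF Fq ^ m * kn.val 0 j) := by
        simpa [dmat, hdj] using hent
      have hv := congrArg Valued.v hEnt
      rw [map_mul, map_mul, tF_v_zpow, hcv, one_mul] at hv
      calc Valued.v (k0.val 0 j)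
          = ((Multiplicative.ofAdd (m : ℤ) : Multiplicative ℤ) : ℤₘ₀) * Valued.v (kn.val 0 j) := hv
        _ ≤ ((Multiplicative.ofAdd (m : ℤ) : Multiplicative ℤ) : ℤₘ₀) * 1 :=
            mul_le_mul_right (hOn 0 j) _
        _ = _ := mul_one _
    exact ⟨s0, k0, hO0, hdet0, hcol 1 (by decide), hcol 2 (by decide),
      hrow 1 (by decide), hrow 2 (by decide), heq0⟩
  · rintro ⟨s, k, hO, hdet, h01, h02, h10, h20, heq⟩
    intro n
    refine ⟨s, k, hO, hdet, ?_⟩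
    have hcomm : k.val * dmat Fq n = dmat Fq n * k.val := by
      ext i j
      rw [dmat, Matrix.mul_diagonal, Matrix.diagonal_mul]
      fin_cases i <;> fin_cases j <;> simp_all <;> ring
    rw [heq, Matrix.smul_mul, hcomm]
end

section
/- The following q²+q+1 matrices in GL₃(F) represent pairwise distinct vertices: the matrix A' = diag(t,t,1); for each b ∈ F_q the matrix B'_b with rows (1, 0, 0), (0, t⁻¹, b), (0, 0, 1); and for each pair (c,d) ∈ F_q × F_q the matrix C'_{c,d} with rows (t⁻¹, c, d), (0, 1, 0), (0, 0, 1), where elements of F_q are regarded in F via the canonical embedding. That is, no two distinct matrices from this list lie in the same coset of Fˣ·GL₃(O): for any two distinct matrices h, h' from the list there do not exist s ∈ Fˣ and k ∈ GL₃(F) with all entries of k in O and det(k) a unit of O such that h' = s • (h·k). -/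
open FunctionField

/-- The canonical embedding of `F_q` into `F = F_q((t⁻¹))`. -/
noncomputable def constEmb (Fq : Type) [Field Fq] [Fintype Fq]
    [DecidableEq (RatFunc Fq)] : Fq →+* RatFunc.CompletionAtInfty Fq :=
  (ratFuncEmb Fq).comp RatFunc.C

/-- Two matrices in `GL₃(F)` represent the same vertex of the building, i.e. the same
coset of `Fˣ·GL₃(O)`. -/
def sameVertex (Fq : Type) [Field Fq] [Fintype Fq] [DecidableEq (RatFunc Fq)]
    (g h : Matrix (Fin 3) (Fin 3) (RatFunc.CompletionAtInfty Fq)) : Prop :=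
  ∃ (s : (RatFunc.CompletionAtInfty Fq)ˣ) (k : GL (Fin 3) (RatFunc.CompletionAtInfty Fq)),
    entriesInO Fq k.val ∧ detUnitO Fq k.val ∧ h = s.val • (g * k.val)

/-- The list of `q²+q+1` representatives of the type `i+2` neighbors of a type `i` vertex:
`A' = diag(t,t,1)`, `B'_b = [[1, 0, 0], [0, t⁻¹, b], [0, 0, 1]]` for `b ∈ F_q`, and
`C'_{c,d} = [[t⁻¹, c, d], [0, 1, 0], [0, 0, 1]]` for `c, d ∈ F_q`. -/
noncomputable def neighborRep2 (Fq : Type) [Field Fq] [Fintype Fq]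
    [DecidableEq (RatFunc Fq)] :
    Unit ⊕ Fq ⊕ Fq × Fq → Matrix (Fin 3) (Fin 3) (RatFunc.CompletionAtInfty Fq)
  | Sum.inl _ => Matrix.diagonal ![tF Fq, tF Fq, 1]
  | Sum.inr (Sum.inl b) =>
      !![1, 0, 0; 0, (tF Fq)⁻¹, constEmb Fq b; 0, 0, 1]
  | Sum.inr (Sum.inr (c, d)) =>
      !![(tF Fq)⁻¹, constEmb Fq c, constEmb Fq d; 0, 1, 0; 0, 0, 1]


open Multiplicative

local notation "ℤₘ₀" => WithZero (Multiplicative ℤ)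

namespace NeighborsAux

variable (Fq : Type) [Field Fq] [Fintype Fq] [DecidableEq (RatFunc Fq)]

set_option linter.unusedSectionVars false

lemma vT : (Valued.v (tF Fq) : ℤₘ₀) = (ofAdd (1 : ℤ) : Multiplicative ℤ) := by
  have h := @Valued.valuedCompletion_apply (RatFunc Fq) _ _ _ (RatFunc.inftyValued Fq) RatFunc.X
  exact h.trans (by rw [@RatFunc.inftyValued.def, ← RatFunc.inftyValuation_apply,
    RatFunc.inftyValuation.X, WithZero.exp])

lemma vConst {b : Fq} (hb : b ≠ 0) : (Valued.v (constEmb Fq b) : ℤₘ₀) = 1 := by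
  have h := @Valued.valuedCompletion_apply (RatFunc Fq) _ _ _ (RatFunc.inftyValued Fq) (RatFunc.C b)
  exact h.trans (by rw [@RatFunc.inftyValued.def, ← RatFunc.inftyValuation_apply,
    RatFunc.inftyValuation.C Fq hb])

lemma tF_ne_zero : tF Fq ≠ 0 := by
  intro h
  have := vT Fq
  rw [h, map_zero] at this
  exact (WithZero.coe_ne_zero (a := ofAdd (1 : ℤ))) this.symm

lemma key' {σ κ : ℤₘ₀} {a d m : ℤ}
    (h3 : σ ^ 3 * ((ofAdd a : Multiplicative ℤ) : ℤₘ₀) = ((ofAdd d : Multiplicative ℤ) : ℤₘ₀))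
    (hm : σ * κ = ((ofAdd m : Multiplicative ℤ) : ℤₘ₀))
    (hκ : κ ≤ 1) (hdm : d < 3 * m + a) : False := by
  have h1 : ((ofAdd m : Multiplicative ℤ) : ℤₘ₀) ≤ σ := by
    rw [← hm]
    calc σ * κ ≤ σ * 1 := mul_le_mul_right hκ σ
    _ = σ := mul_one σ
  have h2 : ((ofAdd m : Multiplicative ℤ) : ℤₘ₀) ^ 3 * ((ofAdd a : Multiplicative ℤ) : ℤₘ₀)
      ≤ σ ^ 3 * ((ofAdd a : Multiplicative ℤ) : ℤₘ₀) :=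
    mul_le_mul_left (pow_le_pow_left' h1 3) _
  rw [h3, ← WithZero.coe_pow, ← WithZero.coe_mul, WithZero.coe_le_coe, ← ofAdd_nsmul,
    ← ofAdd_add] at h2
  have := Multiplicative.ofAdd_le.mp h2
  simp only [nsmul_eq_mul, Nat.cast_ofNat] at this
  omega

lemma diagA : Matrix.diagonal ![tF Fq, tF Fq, 1] =
    !![tF Fq, 0, 0; 0, tF Fq, 0; 0, 0, (1 : RatFunc.CompletionAtInfty Fq)] := by
  ext i j
  fin_cases i <;> fin_cases j <;> simp [Matrix.diagonal, Matrix.vecHead, Matrix.vecTail]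

end NeighborsAux

/-- The `q²+q+1` matrices `A'`, `B'_b` (`b ∈ F_q`), `C'_{c,d}` (`c,d ∈ F_q`) represent
pairwise distinct vertices of the building. -/
theorem neighbors_type2_pairwise_distinct (Fq : Type) [Field Fq] [Fintype Fq]
    [DecidableEq (RatFunc Fq)] :
    ∀ i j : Unit ⊕ Fq ⊕ Fq × Fq, i ≠ j →
      ¬ sameVertex Fq (neighborRep2 Fq i) (neighborRep2 Fq j) := by
  classical
  rintro i j hne hSV
  obtain ⟨s, k, hkO, hkD, heq⟩ := hSV
  have hkD' : Valued.v (Matrix.det k.val) = 1 := hkD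
  have h0 := NeighborsAux.tF_ne_zero Fq
  have vT := NeighborsAux.vT Fq
  rcases i with u | b | ⟨c, d⟩ <;> rcases j with u' | b' | ⟨c', d'⟩ <;>
    simp only [neighborRep2] at heq
  -- case (A, A)
  · exact hne (by cases u; cases u'; rfl)
  -- case (A, B)
  · rw [NeighborsAux.diagA] at heq
    have e := congrFun (congrFun heq 2) 2
    simp only [Matrix.mul_apply, Fin.sum_univ_three, Matrix.smul_apply, smul_eq_mul,
      Matrix.cons_val', Matrix.cons_val_zero, Matrix.cons_val_one, Matrix.head_cons,
      Matrix.empty_val', Matrix.cons_val_fin_one, Matrix.head_fin_const, Matrix.cons_val_two,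
      Matrix.tail_cons, Matrix.of_apply, zero_mul, one_mul, mul_zero, mul_one, zero_add,
      add_zero] at e
    have ve := congrArg Valued.v e
    rw [map_one, map_mul] at ve
    have hd := congrArg Matrix.det heq
    rw [Matrix.det_smul, Matrix.det_mul] at hd
    set D := (k.val).det with hDdef
    simp [Matrix.det_fin_three, Matrix.vecHead, Matrix.vecTail] at hd
    have vd := congrArg Valued.v hd
    simp only [map_mul, map_pow, map_inv₀, hkD', vT, mul_one] at vd
    simp only [← WithZero.coe_inv, ← WithZero.coe_mul, ← WithZero.coe_pow, ← ofAdd_add,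
      ← ofAdd_neg] at vd
    exact NeighborsAux.key' vd.symm ve.symm (hkO 2 2) (by omega)
  -- case (A, C)
  · rw [NeighborsAux.diagA] at heq
    have e := congrFun (congrFun heq 2) 2
    simp only [Matrix.mul_apply, Fin.sum_univ_three, Matrix.smul_apply, smul_eq_mul,
      Matrix.cons_val', Matrix.cons_val_zero, Matrix.cons_val_one, Matrix.head_cons,
      Matrix.empty_val', Matrix.cons_val_fin_one, Matrix.head_fin_const, Matrix.cons_val_two,
      Matrix.tail_cons, Matrix.of_apply, zero_mul, one_mul, mul_zero, mul_one, zero_add,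
      add_zero] at e
    have ve := congrArg Valued.v e
    rw [map_one, map_mul] at ve
    have hd := congrArg Matrix.det heq
    rw [Matrix.det_smul, Matrix.det_mul] at hd
    set D := (k.val).det with hDdef
    simp [Matrix.det_fin_three, Matrix.vecHead, Matrix.vecTail] at hd
    have vd := congrArg Valued.v hd
    simp only [map_mul, map_pow, map_inv₀, hkD', vT, mul_one] at vd
    simp only [← WithZero.coe_inv, ← WithZero.coe_mul, ← WithZero.coe_pow, ← ofAdd_add,
      ← ofAdd_neg] at vd
    exact NeighborsAux.key' vd.symm ve.symm (hkO 2 2) (by omega)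
  -- case (B, A)
  · rw [NeighborsAux.diagA] at heq
    have e2 := congrFun (congrFun heq 2) 1
    simp only [Matrix.mul_apply, Fin.sum_univ_three, Matrix.smul_apply, smul_eq_mul,
      Matrix.cons_val', Matrix.cons_val_zero, Matrix.cons_val_one, Matrix.head_cons,
      Matrix.empty_val', Matrix.cons_val_fin_one, Matrix.head_fin_const, Matrix.cons_val_two,
      Matrix.tail_cons, Matrix.of_apply, zero_mul, one_mul, mul_zero, mul_one, zero_add,
      add_zero] at e2
    have z21 : k.val 2 1 = 0 := by simpa using e2.symm
    have e1 := congrFun (congrFun heq 1) 1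
    simp only [Matrix.mul_apply, Fin.sum_univ_three, Matrix.smul_apply, smul_eq_mul,
      Matrix.cons_val', Matrix.cons_val_zero, Matrix.cons_val_one, Matrix.head_cons,
      Matrix.empty_val', Matrix.cons_val_fin_one, Matrix.head_fin_const, Matrix.cons_val_two,
      Matrix.tail_cons, Matrix.of_apply, zero_mul, one_mul, mul_zero, mul_one, zero_add,
      add_zero, z21] at e1
    have e1' : s.val * k.val 1 1 = tF Fq * tF Fq := by
      field_simp at e1
      linear_combination -e1
    have ve := congrArg Valued.v e1'
    rw [map_mul, map_mul, vT, ← WithZero.coe_mul, ← ofAdd_add] at ve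
    have hd := congrArg Matrix.det heq
    rw [Matrix.det_smul, Matrix.det_mul] at hd
    set D := (k.val).det with hDdef
    simp [Matrix.det_fin_three, Matrix.vecHead, Matrix.vecTail] at hd
    have vd := congrArg Valued.v hd
    simp only [map_mul, map_pow, map_inv₀, hkD', vT, mul_one] at vd
    simp only [← WithZero.coe_inv, ← WithZero.coe_mul, ← WithZero.coe_pow, ← ofAdd_add,
      ← ofAdd_neg] at vd
    exact NeighborsAux.key' vd.symm ve (hkO 1 1) (by omega)
  -- case (B, B')
  · have hbb : b ≠ b' := fun h => hne (by rw [h])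
    have e22 := congrFun (congrFun heq 2) 2
    simp only [Matrix.mul_apply, Fin.sum_univ_three, Matrix.smul_apply, smul_eq_mul,
      Matrix.cons_val', Matrix.cons_val_zero, Matrix.cons_val_one, Matrix.head_cons,
      Matrix.empty_val', Matrix.cons_val_fin_one, Matrix.head_fin_const, Matrix.cons_val_two,
      Matrix.tail_cons, Matrix.of_apply, zero_mul, one_mul, mul_zero, mul_one, zero_add,
      add_zero] at e22
    have e12 := congrFun (congrFun heq 1) 2
    simp only [Matrix.mul_apply, Fin.sum_univ_three, Matrix.smul_apply, smul_eq_mul,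
      Matrix.cons_val', Matrix.cons_val_zero, Matrix.cons_val_one, Matrix.head_cons,
      Matrix.empty_val', Matrix.cons_val_fin_one, Matrix.head_fin_const, Matrix.cons_val_two,
      Matrix.tail_cons, Matrix.of_apply, zero_mul, one_mul, mul_zero, mul_one, zero_add,
      add_zero] at e12
    have e1' : s.val * k.val 1 2 = tF Fq * constEmb Fq (b' - b) := by
      rw [map_sub]
      field_simp at e12
      linear_combination tF Fq * constEmb Fq b * e22 - e12
    have ve := congrArg Valued.v e1'
    rw [map_mul, map_mul, vT, NeighborsAux.vConst Fq (sub_ne_zero.mpr (Ne.symm hbb)),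
      mul_one] at ve
    have hd := congrArg Matrix.det heq
    rw [Matrix.det_smul, Matrix.det_mul] at hd
    set D := (k.val).det with hDdef
    simp [Matrix.det_fin_three, Matrix.vecHead, Matrix.vecTail] at hd
    have vd := congrArg Valued.v hd
    simp only [map_mul, map_pow, map_inv₀, hkD', vT, mul_one] at vd
    simp only [← WithZero.coe_inv, ← WithZero.coe_mul, ← WithZero.coe_pow, ← ofAdd_add,
      ← ofAdd_neg] at vd
    exact NeighborsAux.key' vd.symm ve (hkO 1 2) (by omega)
  -- case (B, C)
  · have e2 := congrFun (congrFun heq 2) 1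
    simp only [Matrix.mul_apply, Fin.sum_univ_three, Matrix.smul_apply, smul_eq_mul,
      Matrix.cons_val', Matrix.cons_val_zero, Matrix.cons_val_one, Matrix.head_cons,
      Matrix.empty_val', Matrix.cons_val_fin_one, Matrix.head_fin_const, Matrix.cons_val_two,
      Matrix.tail_cons, Matrix.of_apply, zero_mul, one_mul, mul_zero, mul_one, zero_add,
      add_zero] at e2
    have z21 : k.val 2 1 = 0 := by simpa using e2.symm
    have e1 := congrFun (congrFun heq 1) 1
    simp only [Matrix.mul_apply, Fin.sum_univ_three, Matrix.smul_apply, smul_eq_mul,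
      Matrix.cons_val', Matrix.cons_val_zero, Matrix.cons_val_one, Matrix.head_cons,
      Matrix.empty_val', Matrix.cons_val_fin_one, Matrix.head_fin_const, Matrix.cons_val_two,
      Matrix.tail_cons, Matrix.of_apply, zero_mul, one_mul, mul_zero, mul_one, zero_add,
      add_zero, z21] at e1
    have e1' : s.val * k.val 1 1 = tF Fq := by
      field_simp at e1
      linear_combination -e1
    have ve := congrArg Valued.v e1'
    rw [map_mul, vT] at ve
    have hd := congrArg Matrix.det heq
    rw [Matrix.det_smul, Matrix.det_mul] at hd
    set D := (k.val).det with hDdef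
    simp [Matrix.det_fin_three, Matrix.vecHead, Matrix.vecTail] at hd
    have vd := congrArg Valued.v hd
    simp only [map_mul, map_pow, map_inv₀, hkD', vT, mul_one] at vd
    simp only [← WithZero.coe_inv, ← WithZero.coe_mul, ← WithZero.coe_pow, ← ofAdd_add,
      ← ofAdd_neg] at vd
    exact NeighborsAux.key' vd.symm ve (hkO 1 1) (by omega)
  -- case (C, A)
  · rw [NeighborsAux.diagA] at heq
    have e10 := congrFun (congrFun heq 1) 0
    simp only [Matrix.mul_apply, Fin.sum_univ_three, Matrix.smul_apply, smul_eq_mul,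
      Matrix.cons_val', Matrix.cons_val_zero, Matrix.cons_val_one, Matrix.head_cons,
      Matrix.empty_val', Matrix.cons_val_fin_one, Matrix.head_fin_const, Matrix.cons_val_two,
      Matrix.tail_cons, Matrix.of_apply, zero_mul, one_mul, mul_zero, mul_one, zero_add,
      add_zero] at e10
    have z10 : k.val 1 0 = 0 := by simpa using e10.symm
    have e20 := congrFun (congrFun heq 2) 0
    simp only [Matrix.mul_apply, Fin.sum_univ_three, Matrix.smul_apply, smul_eq_mul,
      Matrix.cons_val', Matrix.cons_val_zero, Matrix.cons_val_one, Matrix.head_cons,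
      Matrix.empty_val', Matrix.cons_val_fin_one, Matrix.head_fin_const, Matrix.cons_val_two,
      Matrix.tail_cons, Matrix.of_apply, zero_mul, one_mul, mul_zero, mul_one, zero_add,
      add_zero] at e20
    have z20 : k.val 2 0 = 0 := by simpa using e20.symm
    have e00 := congrFun (congrFun heq 0) 0
    simp only [Matrix.mul_apply, Fin.sum_univ_three, Matrix.smul_apply, smul_eq_mul,
      Matrix.cons_val', Matrix.cons_val_zero, Matrix.cons_val_one, Matrix.head_cons,
      Matrix.empty_val', Matrix.cons_val_fin_one, Matrix.head_fin_const, Matrix.cons_val_two,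
      Matrix.tail_cons, Matrix.of_apply, zero_mul, one_mul, mul_zero, mul_one, zero_add,
      add_zero, z10, z20] at e00
    have e1' : s.val * k.val 0 0 = tF Fq * tF Fq := by
      field_simp at e00
      linear_combination -e00
    have ve := congrArg Valued.v e1'
    rw [map_mul, map_mul, vT, ← WithZero.coe_mul, ← ofAdd_add] at ve
    have hd := congrArg Matrix.det heq
    rw [Matrix.det_smul, Matrix.det_mul] at hd
    set D := (k.val).det with hDdef
    simp [Matrix.det_fin_three, Matrix.vecHead, Matrix.vecTail] at hd
    have vd := congrArg Valued.v hd
    simp only [map_mul, map_pow, map_inv₀, hkD', vT, mul_one] at vd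
    simp only [← WithZero.coe_inv, ← WithZero.coe_mul, ← WithZero.coe_pow, ← ofAdd_add,
      ← ofAdd_neg] at vd
    exact NeighborsAux.key' vd.symm ve (hkO 0 0) (by omega)
  -- case (C, B)
  · have e10 := congrFun (congrFun heq 1) 0
    simp only [Matrix.mul_apply, Fin.sum_univ_three, Matrix.smul_apply, smul_eq_mul,
      Matrix.cons_val', Matrix.cons_val_zero, Matrix.cons_val_one, Matrix.head_cons,
      Matrix.empty_val', Matrix.cons_val_fin_one, Matrix.head_fin_const, Matrix.cons_val_two,
      Matrix.tail_cons, Matrix.of_apply, zero_mul, one_mul, mul_zero, mul_one, zero_add,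
      add_zero] at e10
    have z10 : k.val 1 0 = 0 := by simpa using e10.symm
    have e20 := congrFun (congrFun heq 2) 0
    simp only [Matrix.mul_apply, Fin.sum_univ_three, Matrix.smul_apply, smul_eq_mul,
      Matrix.cons_val', Matrix.cons_val_zero, Matrix.cons_val_one, Matrix.head_cons,
      Matrix.empty_val', Matrix.cons_val_fin_one, Matrix.head_fin_const, Matrix.cons_val_two,
      Matrix.tail_cons, Matrix.of_apply, zero_mul, one_mul, mul_zero, mul_one, zero_add,
      add_zero] at e20
    have z20 : k.val 2 0 = 0 := by simpa using e20.symm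
    have e00 := congrFun (congrFun heq 0) 0
    simp only [Matrix.mul_apply, Fin.sum_univ_three, Matrix.smul_apply, smul_eq_mul,
      Matrix.cons_val', Matrix.cons_val_zero, Matrix.cons_val_one, Matrix.head_cons,
      Matrix.empty_val', Matrix.cons_val_fin_one, Matrix.head_fin_const, Matrix.cons_val_two,
      Matrix.tail_cons, Matrix.of_apply, zero_mul, one_mul, mul_zero, mul_one, zero_add,
      add_zero, z10, z20] at e00
    have e1' : s.val * k.val 0 0 = tF Fq := by
      field_simp at e00
      linear_combination -e00
    have ve := congrArg Valued.v e1'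
    rw [map_mul, vT] at ve
    have hd := congrArg Matrix.det heq
    rw [Matrix.det_smul, Matrix.det_mul] at hd
    set D := (k.val).det with hDdef
    simp [Matrix.det_fin_three, Matrix.vecHead, Matrix.vecTail] at hd
    have vd := congrArg Valued.v hd
    simp only [map_mul, map_pow, map_inv₀, hkD', vT, mul_one] at vd
    simp only [← WithZero.coe_inv, ← WithZero.coe_mul, ← WithZero.coe_pow, ← ofAdd_add,
      ← ofAdd_neg] at vd
    exact NeighborsAux.key' vd.symm ve (hkO 0 0) (by omega)
  -- case (C, C')
  · have hcd : ¬(c = c' ∧ d = d') := fun ⟨h1, h2⟩ => hne (by rw [h1, h2])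
    have e11 := congrFun (congrFun heq 1) 1
    simp only [Matrix.mul_apply, Fin.sum_univ_three, Matrix.smul_apply, smul_eq_mul,
      Matrix.cons_val', Matrix.cons_val_zero, Matrix.cons_val_one, Matrix.head_cons,
      Matrix.empty_val', Matrix.cons_val_fin_one, Matrix.head_fin_const, Matrix.cons_val_two,
      Matrix.tail_cons, Matrix.of_apply, zero_mul, one_mul, mul_zero, mul_one, zero_add,
      add_zero] at e11
    have e21 := congrFun (congrFun heq 2) 1
    simp only [Matrix.mul_apply, Fin.sum_univ_three, Matrix.smul_apply, smul_eq_mul,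
      Matrix.cons_val', Matrix.cons_val_zero, Matrix.cons_val_one, Matrix.head_cons,
      Matrix.empty_val', Matrix.cons_val_fin_one, Matrix.head_fin_const, Matrix.cons_val_two,
      Matrix.tail_cons, Matrix.of_apply, zero_mul, one_mul, mul_zero, mul_one, zero_add,
      add_zero] at e21
    have z21 : k.val 2 1 = 0 := by simpa using e21.symm
    have e12 := congrFun (congrFun heq 1) 2
    simp only [Matrix.mul_apply, Fin.sum_univ_three, Matrix.smul_apply, smul_eq_mul,
      Matrix.cons_val', Matrix.cons_val_zero, Matrix.cons_val_one, Matrix.head_cons,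
      Matrix.empty_val', Matrix.cons_val_fin_one, Matrix.head_fin_const, Matrix.cons_val_two,
      Matrix.tail_cons, Matrix.of_apply, zero_mul, one_mul, mul_zero, mul_one, zero_add,
      add_zero] at e12
    have z12 : k.val 1 2 = 0 := by simpa using e12.symm
    have e22 := congrFun (congrFun heq 2) 2
    simp only [Matrix.mul_apply, Fin.sum_univ_three, Matrix.smul_apply, smul_eq_mul,
      Matrix.cons_val', Matrix.cons_val_zero, Matrix.cons_val_one, Matrix.head_cons,
      Matrix.empty_val', Matrix.cons_val_fin_one, Matrix.head_fin_const, Matrix.cons_val_two,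
      Matrix.tail_cons, Matrix.of_apply, zero_mul, one_mul, mul_zero, mul_one, zero_add,
      add_zero] at e22
    have hd := congrArg Matrix.det heq
    rw [Matrix.det_smul, Matrix.det_mul] at hd
    set D := (k.val).det with hDdef
    simp [Matrix.det_fin_three, Matrix.vecHead, Matrix.vecTail] at hd
    have vd := congrArg Valued.v hd
    simp only [map_mul, map_pow, map_inv₀, hkD', vT, mul_one] at vd
    simp only [← WithZero.coe_inv, ← WithZero.coe_mul, ← WithZero.coe_pow, ← ofAdd_add,
      ← ofAdd_neg] at vd
    by_cases hc : c = c'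
    · have hdd : d ≠ d' := fun h => hcd ⟨hc, h⟩
      have e02 := congrFun (congrFun heq 0) 2
      simp only [Matrix.mul_apply, Fin.sum_univ_three, Matrix.smul_apply, smul_eq_mul,
        Matrix.cons_val', Matrix.cons_val_zero, Matrix.cons_val_one, Matrix.head_cons,
        Matrix.empty_val', Matrix.cons_val_fin_one, Matrix.head_fin_const, Matrix.cons_val_two,
        Matrix.tail_cons, Matrix.of_apply, zero_mul, one_mul, mul_zero, mul_one, zero_add,
        add_zero, z12, z21] at e02
      have e1' : s.val * k.val 0 2 = tF Fq * constEmb Fq (d' - d) := by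
        rw [map_sub]
        field_simp at e02
        linear_combination tF Fq * constEmb Fq d * e22 - e02
      have ve := congrArg Valued.v e1'
      rw [map_mul, map_mul, vT, NeighborsAux.vConst Fq (sub_ne_zero.mpr (Ne.symm hdd)),
        mul_one] at ve
      exact NeighborsAux.key' vd.symm ve (hkO 0 2) (by omega)
    · have e01 := congrFun (congrFun heq 0) 1
      simp only [Matrix.mul_apply, Fin.sum_univ_three, Matrix.smul_apply, smul_eq_mul,
        Matrix.cons_val', Matrix.cons_val_zero, Matrix.cons_val_one, Matrix.head_cons,
        Matrix.empty_val', Matrix.cons_val_fin_one, Matrix.head_fin_const, Matrix.cons_val_two,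
        Matrix.tail_cons, Matrix.of_apply, zero_mul, one_mul, mul_zero, mul_one, zero_add,
        add_zero, z12, z21] at e01
      have e1' : s.val * k.val 0 1 = tF Fq * constEmb Fq (c' - c) := by
        rw [map_sub]
        field_simp at e01
        linear_combination tF Fq * constEmb Fq c * e11 - e01
      have ve := congrArg Valued.v e1'
      rw [map_mul, map_mul, vT, NeighborsAux.vConst Fq (sub_ne_zero.mpr (Ne.symm hc)),
        mul_one] at ve
      exact NeighborsAux.key' vd.symm ve (hkO 0 1) (by omega)
end
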